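/- Over ℂ, let A = A'⊕A'', B = B'⊕B'', C = C'⊕C''. Let p' ∈ A'⊗B'⊗C' and p'' ∈ A''⊗B''⊗C'' be concise tensors with underline-R(p') ≤ dim A' and underline-R(p'') ≤ dim A'' (hence in fact underline-R(p') = dim A' and underline-R(p'') = dim A''). Then the additivity of the border rank holds for p = p'⊕p'': underline-R(p) = underline-R(p') + underline-R(p''). -/

import Mathlib

open TensorProduct Module

noncomputable section

/-- The rank of a three-way tensor: the minimal number `r` of simple (rank-one)
tensors such that `p` is a linear combination of `r` of them. -/
def tRank {A B C : Type*} [AddCommGroup A] [Module ℂ A] [AddCommGroup B] [Module ℂ B]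
    [AddCommGroup C] [Module ℂ C] (p : A ⊗[ℂ] (B ⊗[ℂ] C)) : ℕ :=
  sInf {r : ℕ | ∃ (a : Fin r → A) (b : Fin r → B) (c : Fin r → C),
    p = ∑ i, a i ⊗ₜ[ℂ] (b i ⊗ₜ[ℂ] c i)}

/-- The canonical (Euclidean) topology on a finite-dimensional complex vector space. -/
def stdTop (V : Type*) [AddCommGroup V] [Module ℂ V] [FiniteDimensional ℂ V] :
    TopologicalSpace V :=
  TopologicalSpace.induced (Module.finBasis ℂ V).equivFun inferInstance

/-- The border rank of a three-way tensor: the minimal `r` such that `p` lies in the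
closure of the set of tensors of rank at most `r`. -/
def bRank {A B C : Type*} [AddCommGroup A] [Module ℂ A] [FiniteDimensional ℂ A]
    [AddCommGroup B] [Module ℂ B] [FiniteDimensional ℂ B]
    [AddCommGroup C] [Module ℂ C] [FiniteDimensional ℂ C]
    (p : A ⊗[ℂ] (B ⊗[ℂ] C)) : ℕ :=
  sInf {r : ℕ | p ∈ @closure _ (stdTop (A ⊗[ℂ] (B ⊗[ℂ] C))) {q | tRank q ≤ r}}

/-- Contraction of a tensor in `A ⊗ M` against a functional on `A`. -/
def contrA {A M : Type*} [AddCommGroup A] [Module ℂ A] [AddCommGroup M] [Module ℂ M]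
    (α : Module.Dual ℂ A) : A ⊗[ℂ] M →ₗ[ℂ] M :=
  (TensorProduct.lid ℂ M).toLinearMap ∘ₗ TensorProduct.map α LinearMap.id

/-- Contraction of a tensor in `A ⊗ (B ⊗ C)` against a functional on `B`. -/
def contrB {A B C : Type*} [AddCommGroup A] [Module ℂ A] [AddCommGroup B] [Module ℂ B]
    [AddCommGroup C] [Module ℂ C] (β : Module.Dual ℂ B) :
    A ⊗[ℂ] (B ⊗[ℂ] C) →ₗ[ℂ] A ⊗[ℂ] C :=
  TensorProduct.map LinearMap.id
    ((TensorProduct.lid ℂ C).toLinearMap ∘ₗ TensorProduct.map β LinearMap.id)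

/-- Contraction of a tensor in `A ⊗ (B ⊗ C)` against a functional on `C`. -/
def contrC {A B C : Type*} [AddCommGroup A] [Module ℂ A] [AddCommGroup B] [Module ℂ B]
    [AddCommGroup C] [Module ℂ C] (γ : Module.Dual ℂ C) :
    A ⊗[ℂ] (B ⊗[ℂ] C) →ₗ[ℂ] A ⊗[ℂ] B :=
  TensorProduct.map LinearMap.id
    ((TensorProduct.rid ℂ B).toLinearMap ∘ₗ TensorProduct.map LinearMap.id γ)

/-- A tensor `p ∈ A⊗B⊗C` is concise if all three induced linear maps
`A* → B⊗C`, `B* → A⊗C`, `C* → A⊗B` are injective. -/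
def Concise {A B C : Type*} [AddCommGroup A] [Module ℂ A] [AddCommGroup B] [Module ℂ B]
    [AddCommGroup C] [Module ℂ C] (p : A ⊗[ℂ] (B ⊗[ℂ] C)) : Prop :=
  Function.Injective (fun α : Module.Dual ℂ A => contrA α p) ∧
  Function.Injective (fun β : Module.Dual ℂ B => contrB β p) ∧
  Function.Injective (fun γ : Module.Dual ℂ C => contrC γ p)


lemma continuous_stdTop_linear {V W : Type*} [AddCommGroup V] [Module ℂ V]
    [FiniteDimensional ℂ V] [AddCommGroup W] [Module ℂ W] [FiniteDimensional ℂ W]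
    (f : V →ₗ[ℂ] W) : @Continuous V W (stdTop V) (stdTop W) f := by
  letI : TopologicalSpace V := stdTop V
  letI : TopologicalSpace W := stdTop W
  have : @Continuous V W (stdTop V)
      (TopologicalSpace.induced (Module.finBasis ℂ W).equivFun inferInstance) f := by
    apply continuous_induced_rng.2
    have h : ((Module.finBasis ℂ W).equivFun ∘ f : V → _) =
        (((Module.finBasis ℂ W).equivFun.toLinearMap ∘ₗ f ∘ₗ
          ((Module.finBasis ℂ V).equivFun.symm.toLinearMap)) : _ → _) ∘
          (Module.finBasis ℂ V).equivFun := by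
      funext v
      simp only [Function.comp_apply, LinearMap.coe_comp, LinearEquiv.coe_toLinearMap,
        LinearEquiv.symm_apply_apply]
    rw [h]
    exact (LinearMap.continuous_of_finiteDimensional _).comp continuous_induced_dom
  exact this

lemma stdTop_continuousAdd {V : Type*} [AddCommGroup V] [Module ℂ V]
    [FiniteDimensional ℂ V] : @ContinuousAdd V (stdTop V) _ := by
  letI : TopologicalSpace V := stdTop V
  constructor
  have : @Continuous (V × V) V _
      (TopologicalSpace.induced (Module.finBasis ℂ V).equivFun inferInstance)
      (fun p : V × V => p.1 + p.2) := by
    apply continuous_induced_rng.2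
    have h : ((Module.finBasis ℂ V).equivFun ∘ fun p : V × V => p.1 + p.2) =
        fun p : V × V => (Module.finBasis ℂ V).equivFun p.1 +
          (Module.finBasis ℂ V).equivFun p.2 := by
      funext p
      simp only [Function.comp_apply, map_add]
    rw [h]
    exact ((continuous_induced_dom.comp continuous_fst).add
      (continuous_induced_dom.comp continuous_snd))
  exact this

section Aux


variable {V W : Type*} [AddCommGroup V] [Module ℂ V] [FiniteDimensional ℂ V]
  [AddCommGroup W] [Module ℂ W] [FiniteDimensional ℂ W]

lemma continuous_stdTop_to_normed {E : Type*} [NormedAddCommGroup E] [NormedSpace ℂ E]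
    (f : V →ₗ[ℂ] E) : @Continuous V E (stdTop V) _ f := by
  letI : TopologicalSpace V := stdTop V
  have h : (f : V → E) =
      ((f ∘ₗ ((Module.finBasis ℂ V).equivFun.symm.toLinearMap)) : _ → _) ∘
        (Module.finBasis ℂ V).equivFun := by
    funext v
    simp only [Function.comp_apply, LinearMap.coe_comp, LinearEquiv.coe_toLinearMap,
      LinearEquiv.symm_apply_apply]
  rw [h]
  exact (LinearMap.continuous_of_finiteDimensional _).comp continuous_induced_dom

variable {A B C : Type*} [AddCommGroup A] [Module ℂ A] [AddCommGroup B] [Module ℂ B]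
  [AddCommGroup C] [Module ℂ C]

@[simp] lemma contrA_tmul {M : Type*} [AddCommGroup M] [Module ℂ M]
    (α : Module.Dual ℂ A) (a : A) (m : M) :
    contrA α (a ⊗ₜ[ℂ] m) = α a • m := by
  simp [contrA]

def contrAL {M : Type*} [AddCommGroup M] [Module ℂ M] (q : A ⊗[ℂ] M) :
    Module.Dual ℂ A →ₗ[ℂ] M where
  toFun α := contrA α q
  map_add' α β := by simp [contrA, TensorProduct.map_add_left]
  map_smul' s α := by simp [contrA, TensorProduct.map_smul_left]

@[simp] lemma contrAL_apply {M : Type*} [AddCommGroup M] [Module ℂ M]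
    (q : A ⊗[ℂ] M) (α : Module.Dual ℂ A) : contrAL q α = contrA α q := rfl

lemma decomp_add {q1 q2 : A ⊗[ℂ] (B ⊗[ℂ] C)} {r1 r2 : ℕ}
    {a1 : Fin r1 → A} {b1 : Fin r1 → B} {c1 : Fin r1 → C}
    {a2 : Fin r2 → A} {b2 : Fin r2 → B} {c2 : Fin r2 → C}
    (h1 : q1 = ∑ i, a1 i ⊗ₜ[ℂ] (b1 i ⊗ₜ[ℂ] c1 i))
    (h2 : q2 = ∑ i, a2 i ⊗ₜ[ℂ] (b2 i ⊗ₜ[ℂ] c2 i)) :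
    q1 + q2 = ∑ i : Fin (r1 + r2),
      (Fin.append a1 a2 i) ⊗ₜ[ℂ] ((Fin.append b1 b2 i) ⊗ₜ[ℂ] (Fin.append c1 c2 i)) := by
  rw [Fin.sum_univ_add]
  simp only [Fin.append_left, Fin.append_right]
  rw [← h1, ← h2]

lemma exists_fin_decomp (q : A ⊗[ℂ] (B ⊗[ℂ] C)) :
    ∃ (r : ℕ) (a : Fin r → A) (b : Fin r → B) (c : Fin r → C),
      q = ∑ i, a i ⊗ₜ[ℂ] (b i ⊗ₜ[ℂ] c i) := by
  induction q using TensorProduct.induction_on with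
  | zero => exact ⟨0, Fin.elim0, Fin.elim0, Fin.elim0, by simp⟩
  | tmul a m =>
    induction m using TensorProduct.induction_on with
    | zero => exact ⟨0, Fin.elim0, Fin.elim0, Fin.elim0, by simp⟩
    | tmul b c => exact ⟨1, fun _ => a, fun _ => b, fun _ => c, by simp⟩
    | add m1 m2 ih1 ih2 =>
      obtain ⟨r1, a1, b1, c1, h1⟩ := ih1
      obtain ⟨r2, a2, b2, c2, h2⟩ := ih2
      exact ⟨r1 + r2, _, _, _, by rw [TensorProduct.tmul_add]; exact decomp_add h1 h2⟩
  | add q1 q2 ih1 ih2 =>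
    obtain ⟨r1, a1, b1, c1, h1⟩ := ih1
    obtain ⟨r2, a2, b2, c2, h2⟩ := ih2
    exact ⟨r1 + r2, _, _, _, decomp_add h1 h2⟩

lemma tRank_decomp (q : A ⊗[ℂ] (B ⊗[ℂ] C)) :
    ∃ (a : Fin (tRank q) → A) (b : Fin (tRank q) → B) (c : Fin (tRank q) → C),
      q = ∑ i, a i ⊗ₜ[ℂ] (b i ⊗ₜ[ℂ] c i) := by
  have h : {r : ℕ | ∃ (a : Fin r → A) (b : Fin r → B) (c : Fin r → C),
      q = ∑ i, a i ⊗ₜ[ℂ] (b i ⊗ₜ[ℂ] c i)}.Nonempty := by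
    obtain ⟨r, a, b, c, h⟩ := exists_fin_decomp q
    exact ⟨r, a, b, c, h⟩
  exact Nat.sInf_mem h

lemma tRank_le {q : A ⊗[ℂ] (B ⊗[ℂ] C)} {r : ℕ}
    (a : Fin r → A) (b : Fin r → B) (c : Fin r → C)
    (h : q = ∑ i, a i ⊗ₜ[ℂ] (b i ⊗ₜ[ℂ] c i)) : tRank q ≤ r :=
  Nat.sInf_le ⟨a, b, c, h⟩

end Aux

section Lower
variable {A B C : Type*} [AddCommGroup A] [Module ℂ A] [FiniteDimensional ℂ A]
  [AddCommGroup B] [Module ℂ B] [FiniteDimensional ℂ B]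
  [AddCommGroup C] [Module ℂ C] [FiniteDimensional ℂ C]

lemma bRank_set_nonempty (q : A ⊗[ℂ] (B ⊗[ℂ] C)) :
    {r : ℕ | q ∈ @closure _ (stdTop (A ⊗[ℂ] (B ⊗[ℂ] C))) {t | tRank t ≤ r}}.Nonempty := by
  obtain ⟨r0, a, b, c, h⟩ := exists_fin_decomp q
  refine ⟨r0, ?_⟩
  have hmem : q ∈ {t : A ⊗[ℂ] (B ⊗[ℂ] C) | tRank t ≤ r0} := tRank_le a b c h
  show q ∈ @closure _ (stdTop _) {t | tRank t ≤ r0}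
  letI := stdTop (A ⊗[ℂ] (B ⊗[ℂ] C))
  exact subset_closure hmem

lemma finrank_le_bRank (q : A ⊗[ℂ] (B ⊗[ℂ] C))
    (hinj : Function.Injective fun α : Module.Dual ℂ A => contrA α q) :
    finrank ℂ A ≤ bRank q := by
  classical
  refine le_csInf (bRank_set_nonempty q) ?_
  intro r hr
  by_contra hlt
  push_neg at hlt
  have hr1 : r + 1 ≤ finrank ℂ (Module.Dual ℂ A) := by
    rw [Subspace.dual_finrank_eq]; omega
  set δ := Module.finBasis ℂ (Module.Dual ℂ A) with hδ
  set α : Fin (r+1) → Module.Dual ℂ A := fun i => δ (Fin.castLE hr1 i) with hα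
  set L := contrAL q with hL
  have hLker : LinearMap.ker L = ⊥ := LinearMap.ker_eq_bot.2 hinj
  set w : Fin (r+1) → B ⊗[ℂ] C := fun i => L (α i) with hwdef
  have hw : LinearIndependent ℂ w :=
    (δ.linearIndependent.map' L hLker).comp (Fin.castLE hr1) (Fin.castLE_injective hr1)
  set bw := Basis.span hw with hbw
  have hφ : ∀ j : Fin (r+1), ∃ g : Module.Dual ℂ (B ⊗[ℂ] C),
      g ∘ₗ (Submodule.span ℂ (Set.range w)).subtype = bw.coord j := fun j =>
    LinearMap.exists_extend _
  choose φ hφ' using hφ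
  have hφw : ∀ i j, φ j (w i) = if i = j then 1 else 0 := by
    intro i j
    have h1 : w i = (Submodule.span ℂ (Set.range w)).subtype (bw i) := by
      rw [hbw]; exact (congrArg Subtype.val (Basis.span_apply hw i)).symm
    rw [h1, ← LinearMap.comp_apply, hφ' j, Basis.coord_apply, Basis.repr_self,
      Finsupp.single_apply]
  set D : A ⊗[ℂ] (B ⊗[ℂ] C) → ℂ :=
    fun t => Matrix.det (Matrix.of fun i j : Fin (r+1) => φ j (contrA (α i) t)) with hDdef
  have hDcont : @Continuous _ _ (stdTop (A ⊗[ℂ] (B ⊗[ℂ] C))) _ D := by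
    letI := stdTop (A ⊗[ℂ] (B ⊗[ℂ] C))
    apply Continuous.matrix_det
    apply continuous_matrix
    intro i j
    exact continuous_stdTop_to_normed ((φ j) ∘ₗ contrA (α i))
  have key : ∀ (s : ℕ), s ≤ r → ∀ (a : Fin s → A) (b : Fin s → B) (c : Fin s → C),
      D (∑ i, a i ⊗ₜ[ℂ] (b i ⊗ₜ[ℂ] c i)) = 0 := by
    intro s hs a b c
    set v : Fin s → (Fin (r+1) → ℂ) := fun k j => φ j (b k ⊗ₜ[ℂ] c k) with hv
    set M : Matrix (Fin (r+1)) (Fin (r+1)) ℂ :=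
      Matrix.of fun i j : Fin (r+1) =>
        φ j (contrA (α i) (∑ k, a k ⊗ₜ[ℂ] (b k ⊗ₜ[ℂ] c k))) with hM
    have hrow : ∀ i, M i ∈ Submodule.span ℂ (Set.range v) := by
      intro i
      have hrowval : M i = ∑ k, α i (a k) • v k := by
        funext j
        show φ j (contrA (α i) (∑ k, a k ⊗ₜ[ℂ] (b k ⊗ₜ[ℂ] c k))) = _
        rw [map_sum, map_sum, Finset.sum_apply]
        simp [hv]
      rw [hrowval]
      exact Submodule.sum_mem _ fun k _ =>
        Submodule.smul_mem _ _ (Submodule.subset_span ⟨k, rfl⟩)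
    show Matrix.det M = 0
    by_contra hne
    have hunit : IsUnit M := (Matrix.isUnit_iff_isUnit_det _).2 (isUnit_iff_ne_zero.2 hne)
    have hli : LinearIndependent ℂ (fun i => M i) :=
      Matrix.linearIndependent_rows_iff_isUnit.2 hunit
    have h1 : finrank ℂ (Submodule.span ℂ (Set.range fun i => M i)) = r + 1 := by
      rw [finrank_span_eq_card hli, Fintype.card_fin]
    have h2 : Submodule.span ℂ (Set.range fun i => M i) ≤ Submodule.span ℂ (Set.range v) :=
      Submodule.span_le.2 (Set.range_subset_iff.2 hrow)
    have h3 : finrank ℂ (Submodule.span ℂ (Set.range v)) ≤ s := by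
      have := finrank_range_le_card (R := ℂ) v
      simpa [Set.finrank] using this
    have h4 := Submodule.finrank_mono h2
    rw [h1] at h4
    omega
  have hsub : {t : A ⊗[ℂ] (B ⊗[ℂ] C) | tRank t ≤ r} ⊆ {t | D t = 0} := by
    intro t ht
    obtain ⟨a, b, c, hdec⟩ := tRank_decomp t
    show D t = 0
    rw [hdec]
    exact key (tRank t) ht a b c
  have h0 : D q = 0 := by
    letI := stdTop (A ⊗[ℂ] (B ⊗[ℂ] C))
    have hclosed : IsClosed {t | D t = 0} := isClosed_eq hDcont continuous_const
    exact closure_minimal hsub hclosed hr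
  have h1 : D q = 1 := by
    have hMq : (Matrix.of fun i j : Fin (r+1) => φ j (contrA (α i) q)) = 1 := by
      ext i j
      show φ j (contrA (α i) q) = _
      have hwi : contrA (α i) q = w i := rfl
      rw [hwi, hφw, Matrix.one_apply]
    show Matrix.det _ = 1
    rw [hMq, Matrix.det_one]
  rw [h0] at h1
  exact zero_ne_one h1

end Lower


variable (A' A'' B' B'' C' C'' : Type*)
  [AddCommGroup A'] [Module ℂ A'] [AddCommGroup A''] [Module ℂ A'']
  [AddCommGroup B'] [Module ℂ B'] [AddCommGroup B''] [Module ℂ B'']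
  [AddCommGroup C'] [Module ℂ C'] [AddCommGroup C''] [Module ℂ C'']

/-- Inclusion of `A'⊗B'⊗C'` into `(A'⊕A'')⊗(B'⊕B'')⊗(C'⊕C'')`. -/
def incl3L : (A' ⊗[ℂ] (B' ⊗[ℂ] C')) →ₗ[ℂ] ((A' × A'') ⊗[ℂ] ((B' × B'') ⊗[ℂ] (C' × C''))) :=
  TensorProduct.map (LinearMap.inl ℂ A' A'')
    (TensorProduct.map (LinearMap.inl ℂ B' B'') (LinearMap.inl ℂ C' C''))

/-- Inclusion of `A''⊗B''⊗C''` into `(A'⊕A'')⊗(B'⊕B'')⊗(C'⊕C'')`. -/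
def incl3R : (A'' ⊗[ℂ] (B'' ⊗[ℂ] C'')) →ₗ[ℂ] ((A' × A'') ⊗[ℂ] ((B' × B'') ⊗[ℂ] (C' × C''))) :=
  TensorProduct.map (LinearMap.inr ℂ A' A'')
    (TensorProduct.map (LinearMap.inr ℂ B' B'') (LinearMap.inr ℂ C' C''))


section DSum

variable [FiniteDimensional ℂ A'] [FiniteDimensional ℂ A''] [FiniteDimensional ℂ B']
  [FiniteDimensional ℂ B''] [FiniteDimensional ℂ C'] [FiniteDimensional ℂ C'']

lemma incl3L_decomp {r : ℕ} (a : Fin r → A') (b : Fin r → B') (c : Fin r → C') :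
    incl3L A' A'' B' B'' C' C'' (∑ i, a i ⊗ₜ[ℂ] (b i ⊗ₜ[ℂ] c i)) =
      ∑ i, (LinearMap.inl ℂ A' A'' (a i)) ⊗ₜ[ℂ]
        ((LinearMap.inl ℂ B' B'' (b i)) ⊗ₜ[ℂ] (LinearMap.inl ℂ C' C'' (c i))) := by
  rw [map_sum]
  simp [incl3L]

lemma incl3R_decomp {r : ℕ} (a : Fin r → A'') (b : Fin r → B'') (c : Fin r → C'') :
    incl3R A' A'' B' B'' C' C'' (∑ i, a i ⊗ₜ[ℂ] (b i ⊗ₜ[ℂ] c i)) =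
      ∑ i, (LinearMap.inr ℂ A' A'' (a i)) ⊗ₜ[ℂ]
        ((LinearMap.inr ℂ B' B'' (b i)) ⊗ₜ[ℂ] (LinearMap.inr ℂ C' C'' (c i))) := by
  rw [map_sum]
  simp [incl3R]

lemma bRank_dsum_le (p' : A' ⊗[ℂ] (B' ⊗[ℂ] C')) (p'' : A'' ⊗[ℂ] (B'' ⊗[ℂ] C'')) :
    bRank (incl3L A' A'' B' B'' C' C'' p' + incl3R A' A'' B' B'' C' C'' p'')
      ≤ bRank p' + bRank p'' := by
  classical
  have h' : p' ∈ @closure _ (stdTop _) {t : A' ⊗[ℂ] (B' ⊗[ℂ] C') | tRank t ≤ bRank p'} :=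
    Nat.sInf_mem (bRank_set_nonempty p')
  have h'' : p'' ∈ @closure _ (stdTop _) {t : A'' ⊗[ℂ] (B'' ⊗[ℂ] C'') | tRank t ≤ bRank p''} :=
    Nat.sInf_mem (bRank_set_nonempty p'')
  letI tX := stdTop (A' ⊗[ℂ] (B' ⊗[ℂ] C'))
  letI tY := stdTop (A'' ⊗[ℂ] (B'' ⊗[ℂ] C''))
  letI tZ := stdTop ((A' × A'') ⊗[ℂ] ((B' × B'') ⊗[ℂ] (C' × C'')))
  haveI : ContinuousAdd ((A' × A'') ⊗[ℂ] ((B' × B'') ⊗[ℂ] (C' × C''))) := stdTop_continuousAdd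
  set F : (A' ⊗[ℂ] (B' ⊗[ℂ] C')) × (A'' ⊗[ℂ] (B'' ⊗[ℂ] C'')) →
      ((A' × A'') ⊗[ℂ] ((B' × B'') ⊗[ℂ] (C' × C''))) :=
    fun uv => incl3L A' A'' B' B'' C' C'' uv.1 + incl3R A' A'' B' B'' C' C'' uv.2 with hF
  have hc1' := continuous_stdTop_linear (V := A' ⊗[ℂ] (B' ⊗[ℂ] C'))
    (W := (A' × A'') ⊗[ℂ] ((B' × B'') ⊗[ℂ] (C' × C''))) (incl3L A' A'' B' B'' C' C'')
  have hc2' := continuous_stdTop_linear (V := A'' ⊗[ℂ] (B'' ⊗[ℂ] C''))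
    (W := (A' × A'') ⊗[ℂ] ((B' × B'') ⊗[ℂ] (C' × C''))) (incl3R A' A'' B' B'' C' C'')
  have hc1 : Continuous fun uv : (A' ⊗[ℂ] (B' ⊗[ℂ] C')) × (A'' ⊗[ℂ] (B'' ⊗[ℂ] C'')) =>
      incl3L A' A'' B' B'' C' C'' uv.1 := hc1'.comp continuous_fst
  have hc2 : Continuous fun uv : (A' ⊗[ℂ] (B' ⊗[ℂ] C')) × (A'' ⊗[ℂ] (B'' ⊗[ℂ] C'')) =>
      incl3R A' A'' B' B'' C' C'' uv.2 := hc2'.comp continuous_snd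
  have hFc : Continuous F := hc1.add hc2
  have hmaps : Set.MapsTo F
      ({t : A' ⊗[ℂ] (B' ⊗[ℂ] C') | tRank t ≤ bRank p'} ×ˢ
        {t : A'' ⊗[ℂ] (B'' ⊗[ℂ] C'') | tRank t ≤ bRank p''})
      {t | tRank t ≤ bRank p' + bRank p''} := by
    rintro ⟨u, v⟩ ⟨hu, hv⟩
    obtain ⟨a1, b1, c1, hd1⟩ := tRank_decomp u
    obtain ⟨a2, b2, c2, hd2⟩ := tRank_decomp v
    have h1 : incl3L A' A'' B' B'' C' C'' u =
        ∑ i, (LinearMap.inl ℂ A' A'' (a1 i)) ⊗ₜ[ℂ]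
          ((LinearMap.inl ℂ B' B'' (b1 i)) ⊗ₜ[ℂ] (LinearMap.inl ℂ C' C'' (c1 i))) := by
      exact (congrArg (incl3L A' A'' B' B'' C' C'') hd1).trans
        (incl3L_decomp A' A'' B' B'' C' C'' a1 b1 c1)
    have h2 : incl3R A' A'' B' B'' C' C'' v =
        ∑ i, (LinearMap.inr ℂ A' A'' (a2 i)) ⊗ₜ[ℂ]
          ((LinearMap.inr ℂ B' B'' (b2 i)) ⊗ₜ[ℂ] (LinearMap.inr ℂ C' C'' (c2 i))) := by
      exact (congrArg (incl3R A' A'' B' B'' C' C'') hd2).trans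
        (incl3R_decomp A' A'' B' B'' C' C'' a2 b2 c2)
    have hdec := decomp_add h1 h2
    have hle : tRank (F (u, v)) ≤ tRank u + tRank v := tRank_le _ _ _ hdec
    exact le_trans hle (add_le_add hu hv)
  have hcl : (p', p'') ∈ closure
      ({t : A' ⊗[ℂ] (B' ⊗[ℂ] C') | tRank t ≤ bRank p'} ×ˢ
        {t : A'' ⊗[ℂ] (B'' ⊗[ℂ] C'') | tRank t ≤ bRank p''}) := by
    rw [closure_prod_eq]
    exact ⟨h', h''⟩
  have hmem := map_mem_closure hFc hcl hmaps
  exact Nat.sInf_le hmem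

lemma contrA_incl3L (α : Module.Dual ℂ (A' × A'')) (x : A' ⊗[ℂ] (B' ⊗[ℂ] C')) :
    contrA α (incl3L A' A'' B' B'' C' C'' x) =
      (TensorProduct.map (LinearMap.inl ℂ B' B'') (LinearMap.inl ℂ C' C''))
        (contrA (α ∘ₗ LinearMap.inl ℂ A' A'') x) := by
  induction x using TensorProduct.induction_on with
  | zero => simp
  | tmul a m => simp [incl3L, contrA]
  | add x y ihx ihy => rw [map_add, map_add, map_add, map_add, ihx, ihy]

lemma contrA_incl3R (α : Module.Dual ℂ (A' × A'')) (x : A'' ⊗[ℂ] (B'' ⊗[ℂ] C'')) :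
    contrA α (incl3R A' A'' B' B'' C' C'' x) =
      (TensorProduct.map (LinearMap.inr ℂ B' B'') (LinearMap.inr ℂ C' C''))
        (contrA (α ∘ₗ LinearMap.inr ℂ A' A'') x) := by
  induction x using TensorProduct.induction_on with
  | zero => simp
  | tmul a m => simp [incl3R, contrA]
  | add x y ihx ihy => rw [map_add, map_add, map_add, map_add, ihx, ihy]

lemma dsum_injective (p' : A' ⊗[ℂ] (B' ⊗[ℂ] C')) (p'' : A'' ⊗[ℂ] (B'' ⊗[ℂ] C''))
    (h' : Function.Injective fun α : Module.Dual ℂ A' => contrA α p')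
    (h'' : Function.Injective fun α : Module.Dual ℂ A'' => contrA α p'') :
    Function.Injective fun α : Module.Dual ℂ (A' × A'') =>
      contrA α (incl3L A' A'' B' B'' C' C'' p' + incl3R A' A'' B' B'' C' C'' p'') := by
  set P := incl3L A' A'' B' B'' C' C'' p' + incl3R A' A'' B' B'' C' C'' p'' with hP
  have hker : LinearMap.ker (contrAL P) = ⊥ := by
    rw [LinearMap.ker_eq_bot']
    intro α hα0
    have hα0' : contrA α P = 0 := hα0
    rw [hP, map_add, contrA_incl3L, contrA_incl3R] at hα0'
    -- project to the two components
    have key : ∀ (πB : (B' × B'') →ₗ[ℂ] B') (πC : (C' × C'') →ₗ[ℂ] C')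
        (πB' : (B' × B'') →ₗ[ℂ] B'') (πC' : (C' × C'') →ₗ[ℂ] C''), True := fun _ _ _ _ => trivial
    have e1 : (TensorProduct.map (LinearMap.fst ℂ B' B'') (LinearMap.fst ℂ C' C''))
        ((TensorProduct.map (LinearMap.inl ℂ B' B'') (LinearMap.inl ℂ C' C''))
          (contrA (α ∘ₗ LinearMap.inl ℂ A' A'') p')) =
        contrA (α ∘ₗ LinearMap.inl ℂ A' A'') p' := by
      rw [← LinearMap.comp_apply, ← TensorProduct.map_comp]
      simp [TensorProduct.map_id]
    have e2 : (TensorProduct.map (LinearMap.fst ℂ B' B'') (LinearMap.fst ℂ C' C''))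
        ((TensorProduct.map (LinearMap.inr ℂ B' B'') (LinearMap.inr ℂ C' C''))
          (contrA (α ∘ₗ LinearMap.inr ℂ A' A'') p'')) = 0 := by
      rw [← LinearMap.comp_apply, ← TensorProduct.map_comp]
      simp
    have e3 : (TensorProduct.map (LinearMap.snd ℂ B' B'') (LinearMap.snd ℂ C' C''))
        ((TensorProduct.map (LinearMap.inl ℂ B' B'') (LinearMap.inl ℂ C' C''))
          (contrA (α ∘ₗ LinearMap.inl ℂ A' A'') p')) = 0 := by
      rw [← LinearMap.comp_apply, ← TensorProduct.map_comp]
      simp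
    have e4 : (TensorProduct.map (LinearMap.snd ℂ B' B'') (LinearMap.snd ℂ C' C''))
        ((TensorProduct.map (LinearMap.inr ℂ B' B'') (LinearMap.inr ℂ C' C''))
          (contrA (α ∘ₗ LinearMap.inr ℂ A' A'') p'')) =
        contrA (α ∘ₗ LinearMap.inr ℂ A' A'') p'' := by
      rw [← LinearMap.comp_apply, ← TensorProduct.map_comp]
      simp [TensorProduct.map_id]
    have hz1 : contrA (α ∘ₗ LinearMap.inl ℂ A' A'') p' = 0 := by
      have := congrArg (TensorProduct.map (LinearMap.fst ℂ B' B'') (LinearMap.fst ℂ C' C'')) hα0'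
      rw [map_add, e1, e2, add_zero, map_zero] at this
      exact this
    have hz2 : contrA (α ∘ₗ LinearMap.inr ℂ A' A'') p'' = 0 := by
      have := congrArg (TensorProduct.map (LinearMap.snd ℂ B' B'') (LinearMap.snd ℂ C' C'')) hα0'
      rw [map_add, e3, e4, zero_add, map_zero] at this
      exact this
    have hαl : α ∘ₗ LinearMap.inl ℂ A' A'' = 0 := by
      apply h'
      show contrA _ p' = contrA 0 p'
      rw [hz1]
      exact (map_zero (contrAL p')).symm
    have hαr : α ∘ₗ LinearMap.inr ℂ A' A'' = 0 := by
      apply h''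
      show contrA _ p'' = contrA 0 p''
      rw [hz2]
      exact (map_zero (contrAL p'')).symm
    apply LinearMap.ext
    rintro ⟨x1, x2⟩
    have hx : (⟨x1, x2⟩ : A' × A'') = LinearMap.inl ℂ A' A'' x1 + LinearMap.inr ℂ A' A'' x2 := by
      simp
    rw [hx, map_add]
    have hx1 : α (LinearMap.inl ℂ A' A'' x1) = 0 := by
      have := congrArg (fun f : A' →ₗ[ℂ] ℂ => f x1) hαl
      simpa using this
    have hx2 : α (LinearMap.inr ℂ A' A'' x2) = 0 := by
      have := congrArg (fun f : A'' →ₗ[ℂ] ℂ => f x2) hαr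
      simpa using this
    rw [hx1, hx2]
    simp
  exact LinearMap.ker_eq_bot.1 hker

end DSum

/-- Over `ℂ`, if `p'` and `p''` are concise tensors with
`border rank ≤ dim A'` resp. `≤ dim A''`, then the additivity of the border rank holds
for `p = p'⊕p''`. -/
theorem border_rank_additivity_of_minimal_border_rank
    [FiniteDimensional ℂ A'] [FiniteDimensional ℂ A''] [FiniteDimensional ℂ B']
    [FiniteDimensional ℂ B''] [FiniteDimensional ℂ C'] [FiniteDimensional ℂ C'']
    (p' : A' ⊗[ℂ] (B' ⊗[ℂ] C')) (p'' : A'' ⊗[ℂ] (B'' ⊗[ℂ] C''))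
    (hconc' : Concise p') (hconc'' : Concise p'')
    (hbr' : bRank p' ≤ finrank ℂ A') (hbr'' : bRank p'' ≤ finrank ℂ A'') :
    bRank (incl3L A' A'' B' B'' C' C'' p' + incl3R A' A'' B' B'' C' C'' p'')
      = bRank p' + bRank p'' := by
  classical
  have e' : bRank p' = finrank ℂ A' := le_antisymm hbr' (finrank_le_bRank p' hconc'.1)
  have e'' : bRank p'' = finrank ℂ A'' := le_antisymm hbr'' (finrank_le_bRank p'' hconc''.1)
  have hup := bRank_dsum_le A' A'' B' B'' C' C'' p' p''
  have hinjP := dsum_injective A' A'' B' B'' C' C'' p' p'' hconc'.1 hconc''.1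
  have hlow := finrank_le_bRank _ hinjP
  have hprod : finrank ℂ (A' × A'') = finrank ℂ A' + finrank ℂ A'' := Module.finrank_prod
  omega
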